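/- Let m ≥ 1 and φ ∈ C^∞(ℝ²) be m-admissible with φ(0) = 0, and set ZF(ζ) = (φ_ξ(ζ) − |ζ|^{2m} η, φ_η(ζ) + |ζ|^{2m} ξ). Then there is a constant C ≥ 1 depending only on m and the admissibility constant such that for all r > 0: C^{-1} r^{2m+3} ≤ ∫_{|ζ| < r} |ZF(ζ)| dξ dη ≤ C r^{2m+3}. -/

import Mathlib

open MeasureTheory Set

noncomputable section

/-- Euclidean norm on ℝ². -/
def nrm (z : ℝ × ℝ) : ℝ := Real.sqrt (z.1 ^ 2 + z.2 ^ 2)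

/-- `|z|^(2m)` for a real parameter `m`. -/
def w2m (m : ℝ) (z : ℝ × ℝ) : ℝ := (z.1 ^ 2 + z.2 ^ 2) ^ m
/-- `φ` is `m`-admissible with constant `C`:
`|D³φ(z)| ≤ C|z|^(2m−1)`, `|D²φ(z)| ≤ C|z|^(2m)`, `|Dφ(z)| ≤ C|z|^(2m+1)`. -/
def Admissible (m C : ℝ) (φ : ℝ × ℝ → ℝ) : Prop :=
  ContDiff ℝ (⊤ : ℕ∞) φ ∧
  (∀ z, ‖iteratedFDeriv ℝ 1 φ z‖ ≤ C * nrm z ^ (2 * m + 1)) ∧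
  (∀ z, ‖iteratedFDeriv ℝ 2 φ z‖ ≤ C * nrm z ^ (2 * m)) ∧
  (∀ z, ‖iteratedFDeriv ℝ 3 φ z‖ ≤ C * nrm z ^ (2 * m - 1))

/-- `φ_x`. -/
def phx (φ : ℝ × ℝ → ℝ) (z : ℝ × ℝ) : ℝ := fderiv ℝ φ z (1, 0)

/-- `φ_y`. -/
def phy (φ : ℝ × ℝ → ℝ) (z : ℝ × ℝ) : ℝ := fderiv ℝ φ z (0, 1)

/-- `XF(z) = φ_x(z) − |z|^(2m) y` for `F(z,t) = φ(z) − t`. -/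
def ZFx (m : ℝ) (φ : ℝ × ℝ → ℝ) (z : ℝ × ℝ) : ℝ := phx φ z - w2m m z * z.2

/-- `YF(z) = φ_y(z) + |z|^(2m) x` for `F(z,t) = φ(z) − t`. -/
def ZFy (m : ℝ) (φ : ℝ × ℝ → ℝ) (z : ℝ × ℝ) : ℝ := phy φ z + w2m m z * z.1

/-- `|ZF(z)|`. -/
def ZFnorm (m : ℝ) (φ : ℝ × ℝ → ℝ) (z : ℝ × ℝ) : ℝ :=
  Real.sqrt (ZFx m φ z ^ 2 + ZFy m φ z ^ 2)

lemma cs_ineq (a b u v : ℝ) : a*u + b*v ≤ Real.sqrt (a^2+b^2) * Real.sqrt (u^2+v^2) := by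
  have h1 := Real.sqrt_nonneg (a^2+b^2)
  have h2 := Real.sqrt_nonneg (u^2+v^2)
  have e1 : Real.sqrt (a^2+b^2) ^ 2 = a^2+b^2 := Real.sq_sqrt (by positivity)
  have e2 : Real.sqrt (u^2+v^2) ^ 2 = u^2+v^2 := Real.sq_sqrt (by positivity)
  nlinarith [sq_nonneg (a*v - b*u), mul_nonneg h1 h2,
    sq_nonneg (Real.sqrt (a^2+b^2) * Real.sqrt (u^2+v^2) - (a*u+b*v)),
    sq_nonneg (Real.sqrt (a^2+b^2) * Real.sqrt (u^2+v^2) + (a*u+b*v))]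

lemma clm_pair (L : ℝ×ℝ →L[ℝ] ℝ) (a b : ℝ) : L (a, b) = a * L (1,0) + b * L (0,1) := by
  have h : ((a,b) : ℝ×ℝ) = a • ((1:ℝ),(0:ℝ)) + b • ((0:ℝ),(1:ℝ)) := by
    simp [Prod.ext_iff]
  rw [h, map_add, _root_.map_smul, _root_.map_smul, smul_eq_mul, smul_eq_mul]

variable {m Ca : ℝ} {φ : ℝ × ℝ → ℝ}

lemma nrm_nonneg (z : ℝ × ℝ) : 0 ≤ nrm z := Real.sqrt_nonneg _

lemma w2m_eq (z : ℝ × ℝ) : w2m m z = nrm z ^ (2*m) := by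
  unfold w2m nrm
  rw [Real.sqrt_eq_rpow, ← Real.rpow_mul (by positivity)]
  congr 1; ring

lemma abs_snd_le (z : ℝ × ℝ) : |z.2| ≤ nrm z := by
  rw [← Real.sqrt_sq_eq_abs]
  exact Real.sqrt_le_sqrt (by nlinarith [sq_nonneg z.1])

lemma abs_fst_le (z : ℝ × ℝ) : |z.1| ≤ nrm z := by
  rw [← Real.sqrt_sq_eq_abs]
  exact Real.sqrt_le_sqrt (by nlinarith [sq_nonneg z.2])

lemma cont_phx (hφ : ContDiff ℝ (⊤ : ℕ∞) φ) : Continuous (phx φ) :=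
  (hφ.continuous_fderiv (by simp)).clm_apply continuous_const

lemma cont_phy (hφ : ContDiff ℝ (⊤ : ℕ∞) φ) : Continuous (phy φ) :=
  (hφ.continuous_fderiv (by simp)).clm_apply continuous_const

lemma cont_w2m (hm : 1 ≤ m) : Continuous (w2m m) := by
  have h : Continuous fun z : ℝ×ℝ => z.1^2 + z.2^2 := by continuity
  exact h.rpow_const (fun z => Or.inr (by linarith))

lemma cont_ZFnorm (hm : 1 ≤ m) (hφ : ContDiff ℝ (⊤ : ℕ∞) φ) : Continuous (ZFnorm m φ) := by
  unfold ZFnorm ZFx ZFy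
  apply Real.continuous_sqrt.comp
  apply Continuous.add
  · exact (((cont_phx hφ).sub ((cont_w2m hm).mul continuous_snd)).pow 2)
  · exact (((cont_phy hφ).add ((cont_w2m hm).mul continuous_fst)).pow 2)

lemma phx_le (hAd : Admissible m Ca φ) (z : ℝ × ℝ) : |phx φ z| ≤ Ca * nrm z ^ (2*m+1) := by
  obtain ⟨hφ, h1, -, -⟩ := hAd
  have key : phx φ z = (iteratedFDeriv ℝ 1 φ z) ![((1:ℝ),(0:ℝ))] := by
    rw [iteratedFDeriv_one_apply]; rfl
  calc |phx φ z| = ‖(iteratedFDeriv ℝ 1 φ z) ![((1:ℝ),(0:ℝ))]‖ := by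
        rw [key, Real.norm_eq_abs]
    _ ≤ ‖iteratedFDeriv ℝ 1 φ z‖ * ∏ i : Fin 1, ‖(![((1:ℝ),(0:ℝ))]) i‖ :=
        ContinuousMultilinearMap.le_opNorm _ _
    _ ≤ Ca * nrm z ^ (2*m+1) := by
        simpa [Prod.norm_def] using h1 z

lemma phy_le (hAd : Admissible m Ca φ) (z : ℝ × ℝ) : |phy φ z| ≤ Ca * nrm z ^ (2*m+1) := by
  obtain ⟨hφ, h1, -, -⟩ := hAd
  have key : phy φ z = (iteratedFDeriv ℝ 1 φ z) ![((0:ℝ),(1:ℝ))] := by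
    rw [iteratedFDeriv_one_apply]; rfl
  calc |phy φ z| = ‖(iteratedFDeriv ℝ 1 φ z) ![((0:ℝ),(1:ℝ))]‖ := by
        rw [key, Real.norm_eq_abs]
    _ ≤ ‖iteratedFDeriv ℝ 1 φ z‖ * ∏ i : Fin 1, ‖(![((0:ℝ),(1:ℝ))]) i‖ :=
        ContinuousMultilinearMap.le_opNorm _ _
    _ ≤ Ca * nrm z ^ (2*m+1) := by
        simpa [Prod.norm_def] using h1 z

lemma ZFnorm_le (hm : 1 ≤ m) (hAd : Admissible m Ca φ) (z : ℝ × ℝ) :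
    ZFnorm m φ z ≤ 2*(Ca+1) * nrm z ^ (2*m+1) := by
  have hx : |ZFx m φ z| ≤ (Ca+1) * nrm z ^ (2*m+1) := by
    have h1 := phx_le hAd z
    have h2 : w2m m z * |z.2| ≤ nrm z ^ (2*m+1) := by
      rw [w2m_eq, Real.rpow_add' (nrm_nonneg z) (by intro h; linarith : 2*m + 1 ≠ 0)]
      have := abs_snd_le z
      have h3 : nrm z ^ (2*m) * |z.2| ≤ nrm z ^ (2*m) * nrm z ^ (1:ℝ) := by
        rw [Real.rpow_one]
        exact mul_le_mul_of_nonneg_left this (Real.rpow_nonneg (nrm_nonneg z) _)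
      exact h3
    have habs : |ZFx m φ z| ≤ |phx φ z| + w2m m z * |z.2| := by
      unfold ZFx
      have hw : 0 ≤ w2m m z := by unfold w2m; positivity
      calc |phx φ z - w2m m z * z.2| ≤ |phx φ z| + |w2m m z * z.2| := abs_sub _ _
        _ = |phx φ z| + w2m m z * |z.2| := by rw [abs_mul, abs_of_nonneg hw]
    nlinarith [Real.rpow_nonneg (nrm_nonneg z) (2*m+1)]
  have hy : |ZFy m φ z| ≤ (Ca+1) * nrm z ^ (2*m+1) := by
    have h1 := phy_le hAd z
    have h2 : w2m m z * |z.1| ≤ nrm z ^ (2*m+1) := by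
      rw [w2m_eq, Real.rpow_add' (nrm_nonneg z) (by intro h; linarith : 2*m + 1 ≠ 0)]
      have := abs_fst_le z
      have h3 : nrm z ^ (2*m) * |z.1| ≤ nrm z ^ (2*m) * nrm z ^ (1:ℝ) := by
        rw [Real.rpow_one]
        exact mul_le_mul_of_nonneg_left this (Real.rpow_nonneg (nrm_nonneg z) _)
      exact h3
    have habs : |ZFy m φ z| ≤ |phy φ z| + w2m m z * |z.1| := by
      unfold ZFy
      have hw : 0 ≤ w2m m z := by unfold w2m; positivity
      calc |phy φ z + w2m m z * z.1| ≤ |phy φ z| + |w2m m z * z.1| := abs_add_le _ _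
        _ = |phy φ z| + w2m m z * |z.1| := by rw [abs_mul, abs_of_nonneg hw]
    nlinarith [Real.rpow_nonneg (nrm_nonneg z) (2*m+1)]
  calc ZFnorm m φ z ≤ |ZFx m φ z| + |ZFy m φ z| := by
        unfold ZFnorm
        rw [show ZFx m φ z ^2 + ZFy m φ z^2 = |ZFx m φ z|^2 + |ZFy m φ z|^2 by simp [sq_abs]]
        have h : |ZFx m φ z|^2 + |ZFy m φ z|^2 ≤ (|ZFx m φ z|+|ZFy m φ z|)^2 := by
          nlinarith [abs_nonneg (ZFx m φ z), abs_nonneg (ZFy m φ z)]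
        calc Real.sqrt _ ≤ Real.sqrt ((|ZFx m φ z|+|ZFy m φ z|)^2) := Real.sqrt_le_sqrt h
          _ = _ := Real.sqrt_sq (by positivity)
    _ ≤ 2*(Ca+1) * nrm z ^ (2*m+1) := by linarith


set_option maxHeartbeats 2000000 in
/-- For an `m`-admissible function with `φ(0) = 0`,
`C⁻¹ r^(2m+3) ≤ ∫_{|ζ|<r} |ZF(ζ)| ≤ C r^(2m+3)`. -/
theorem stmt16 (m Ca : ℝ) (hm : 1 ≤ m) (hCa : 0 < Ca) :
    ∃ C : ℝ, 1 ≤ C ∧ ∀ φ : ℝ × ℝ → ℝ, Admissible m Ca φ → φ 0 = 0 →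
      ∀ r : ℝ, 0 < r →
        C⁻¹ * r ^ (2 * m + 3) ≤
            (∫ ζ in {ζ : ℝ × ℝ | ζ.1 ^ 2 + ζ.2 ^ 2 < r ^ 2}, ZFnorm m φ ζ) ∧
        (∫ ζ in {ζ : ℝ × ℝ | ζ.1 ^ 2 + ζ.2 ^ 2 < r ^ 2}, ZFnorm m φ ζ) ≤
            C * r ^ (2 * m + 3) := by
  have hπ := Real.pi_pos
  have hπ3 := Real.pi_gt_three
  refine ⟨8*(Ca+1) + 2*m + 3, by nlinarith, ?_⟩
  intro φ hAd hφ0 r hr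
  have hφ : ContDiff ℝ (⊤ : ℕ∞) φ := hAd.1
  set s : Set (ℝ×ℝ) := {ζ : ℝ × ℝ | ζ.1 ^ 2 + ζ.2 ^ 2 < r ^ 2} with hs_def
  have hs_open : IsOpen s := by
    have h : s = (fun ζ : ℝ×ℝ => ζ.1^2 + ζ.2^2) ⁻¹' Iio (r^2) := rfl
    rw [h]; exact isOpen_Iio.preimage (by continuity)
  have hs_meas := hs_open.measurableSet
  have hGcont : Continuous (ZFnorm m φ) := cont_ZFnorm hm hφ
  have hGnonneg : ∀ z, 0 ≤ ZFnorm m φ z := fun z => Real.sqrt_nonneg _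
  -- upper bound
  have hsub : s ⊆ Ioo (-r) r ×ˢ Ioo (-r) r := by
    rintro ⟨x,y⟩ hz
    simp only [hs_def, mem_setOf_eq] at hz
    constructor
    · constructor <;> nlinarith [sq_nonneg (x+r), sq_nonneg (x-r), sq_nonneg y]
    · constructor <;> nlinarith [sq_nonneg (y+r), sq_nonneg (y-r), sq_nonneg x]
  have hvol : volume s ≤ ENNReal.ofReal (2*r) * ENNReal.ofReal (2*r) := by
    calc volume s ≤ volume (Ioo (-r) r ×ˢ Ioo (-r) r) := measure_mono hsub
      _ = ENNReal.ofReal (2*r) * ENNReal.ofReal (2*r) := by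
          simp only [MeasureTheory.Measure.volume_eq_prod, Measure.prod_prod, Real.volume_Ioo]
          rw [show r - -r = 2*r by ring]
  have hvol_fin : volume s < ⊤ := lt_of_le_of_lt hvol (by finiteness)
  have htoReal : (volume s).toReal ≤ 4*r^2 := by
    have h1 : (ENNReal.ofReal (2*r) * ENNReal.ofReal (2*r)).toReal = (2*r)*(2*r) := by
      rw [ENNReal.toReal_mul, ENNReal.toReal_ofReal (by linarith)]
    have h2 := ENNReal.toReal_mono (by finiteness) hvol
    rw [h1] at h2; nlinarith
  have hupper : (∫ ζ in s, ZFnorm m φ ζ) ≤ 8*(Ca+1) * r^(2*m+3) := by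
    have hbd : ∀ z ∈ s, ‖ZFnorm m φ z‖ ≤ 2*(Ca+1) * r^(2*m+1) := by
      intro z hz
      rw [Real.norm_eq_abs, abs_of_nonneg (hGnonneg z)]
      refine le_trans (ZFnorm_le hm hAd z) ?_
      have hnz : nrm z ≤ r := by
        simp only [hs_def, mem_setOf_eq] at hz
        calc nrm z = Real.sqrt (z.1^2+z.2^2) := rfl
          _ ≤ Real.sqrt (r^2) := Real.sqrt_le_sqrt hz.le
          _ = r := Real.sqrt_sq hr.le
      have h := Real.rpow_le_rpow (nrm_nonneg z) hnz (by linarith : (0:ℝ) ≤ 2*m+1)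
      nlinarith [h]
    have hnorm := norm_setIntegral_le_of_norm_le_const hvol_fin hbd
    have hint_le : (∫ ζ in s, ZFnorm m φ ζ) ≤ 2*(Ca+1)*r^(2*m+1) * (volume s).toReal := by
      refine le_trans (le_abs_self _) ?_
      rw [← Real.norm_eq_abs]; exact hnorm
    have hexp : r ^ (2*m+3) = r^(2*m+1) * r^2 := by
      rw [show (2*m+3) = (2*m+1) + 2 by ring, Real.rpow_add hr, Real.rpow_two]
    have hr1 : (0:ℝ) ≤ r ^ (2*m+1) := Real.rpow_nonneg hr.le _
    calc (∫ ζ in s, ZFnorm m φ ζ) ≤ 2*(Ca+1)*r^(2*m+1) * (volume s).toReal := hint_le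
      _ ≤ 2*(Ca+1)*r^(2*m+1) * (4*r^2) :=
          mul_le_mul_of_nonneg_left htoReal (by positivity)
      _ = 8*(Ca+1) * r^(2*m+3) := by rw [hexp]; ring
  -- lower bound
  set F : ℝ×ℝ → ℝ := fun p => p.1 * ZFnorm m φ (p.1 * Real.cos p.2, p.1 * Real.sin p.2)
    with hF_def
  have hFcont : Continuous F := by
    apply continuous_fst.mul
    apply hGcont.comp
    exact (continuous_fst.mul (Real.continuous_cos.comp continuous_snd)).prodMk
      (continuous_fst.mul (Real.continuous_sin.comp continuous_snd))
  have hT_meas : MeasurableSet (Ioo (0:ℝ) r ×ˢ Ioo (-Real.pi) Real.pi) :=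
    measurableSet_Ioo.prod measurableSet_Ioo
  have hF_int : IntegrableOn F (Ioo (0:ℝ) r ×ˢ Ioo (-Real.pi) Real.pi) := by
    have hcpt : IsCompact (Icc (0:ℝ) r ×ˢ Icc (-Real.pi) Real.pi) :=
      isCompact_Icc.prod isCompact_Icc
    exact (hFcont.continuousOn.integrableOn_compact hcpt).mono_set
      (prod_mono Ioo_subset_Icc_self Ioo_subset_Icc_self)
  have e1 : (∫ ζ in s, ZFnorm m φ ζ) = ∫ p, s.indicator (ZFnorm m φ) p :=
    (integral_indicator hs_meas).symm
  have e2 := integral_comp_polarCoord_symm (s.indicator (ZFnorm m φ))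
  have htarget : polarCoord.target = Ioi (0:ℝ) ×ˢ Ioo (-Real.pi) Real.pi := rfl
  have e3 : (∫ p in Ioi (0:ℝ) ×ˢ Ioo (-Real.pi) Real.pi,
        p.1 • (s.indicator (ZFnorm m φ)) (polarCoord.symm p))
      = ∫ p in Ioo (0:ℝ) r ×ˢ Ioo (-Real.pi) Real.pi,
          p.1 • (s.indicator (ZFnorm m φ)) (polarCoord.symm p) := by
    refine setIntegral_eq_of_subset_of_forall_diff_eq_zero
      (measurableSet_Ioi.prod measurableSet_Ioo)
      (prod_mono Ioo_subset_Ioi_self subset_rfl) ?_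
    rintro ⟨ρ, θ⟩ ⟨hmem, hnot⟩
    obtain ⟨hρ1, hθ⟩ := hmem
    have hρr : r ≤ ρ := by
      by_contra h
      exact hnot ⟨⟨hρ1, lt_of_not_ge h⟩, hθ⟩
    have hns : polarCoord.symm (ρ, θ) ∉ s := by
      rw [polarCoord_symm_apply]
      simp only [hs_def, mem_setOf_eq, not_lt]
      have hpy : (ρ * Real.cos θ)^2 + (ρ * Real.sin θ)^2 = ρ^2 := by
        have := Real.sin_sq_add_cos_sq θ; nlinarith
      rw [hpy]
      have : (0:ℝ) < ρ := hρ1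
      nlinarith
    rw [Set.indicator_of_notMem hns, smul_zero]
  have e4 : (∫ p in Ioo (0:ℝ) r ×ˢ Ioo (-Real.pi) Real.pi,
        p.1 • (s.indicator (ZFnorm m φ)) (polarCoord.symm p))
      = ∫ p in Ioo (0:ℝ) r ×ˢ Ioo (-Real.pi) Real.pi, F p := by
    refine setIntegral_congr_fun hT_meas ?_
    rintro ⟨ρ, θ⟩ ⟨hρ, hθ⟩
    have hmem : polarCoord.symm (ρ, θ) ∈ s := by
      rw [polarCoord_symm_apply]
      simp only [hs_def, mem_setOf_eq]
      have hpy : (ρ * Real.cos θ)^2 + (ρ * Real.sin θ)^2 = ρ^2 := by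
        have := Real.sin_sq_add_cos_sq θ; nlinarith
      rw [hpy]
      have h0 : (0:ℝ) < ρ := hρ.1
      nlinarith [hρ.2]
    rw [polarCoord_symm_apply] at hmem
    simp only [polarCoord_symm_apply, Set.indicator_of_mem hmem, smul_eq_mul, hF_def]
  have hF_int' : Integrable F
      ((volume.restrict (Ioo (0:ℝ) r)).prod (volume.restrict (Ioo (-Real.pi) Real.pi))) := by
    rw [Measure.prod_restrict, ← Measure.volume_eq_prod]
    exact hF_int
  have e5 : (∫ p in Ioo (0:ℝ) r ×ˢ Ioo (-Real.pi) Real.pi, F p)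
      = ∫ ρ in Ioo (0:ℝ) r, ∫ θ in Ioo (-Real.pi) Real.pi, F (ρ, θ) := by
    rw [MeasureTheory.Measure.volume_eq_prod]
    exact setIntegral_prod F (by rw [Measure.volume_eq_prod] at hF_int; exact hF_int)
  have houter : IntegrableOn (fun ρ => ∫ θ in Ioo (-Real.pi) Real.pi, F (ρ, θ))
      (Ioo (0:ℝ) r) := hF_int'.integral_prod_left
  have hinner : ∀ ρ ∈ Ioo (0:ℝ) r,
      2*Real.pi*ρ^(2*m+2) ≤ ∫ θ in Ioo (-Real.pi) Real.pi, F (ρ, θ) := by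
    rintro ρ ⟨hρ0, hρr⟩
    have hderiv : ∀ θ : ℝ, HasDerivAt (fun θ => φ (ρ * Real.cos θ, ρ * Real.sin θ))
        (fderiv ℝ φ (ρ * Real.cos θ, ρ * Real.sin θ) (-(ρ * Real.sin θ), ρ * Real.cos θ)) θ := by
      intro θ
      have h1 : HasDerivAt (fun θ => ρ * Real.cos θ) (-(ρ * Real.sin θ)) θ := by
        simpa [mul_comm, neg_mul, mul_neg] using (Real.hasDerivAt_cos θ).const_mul ρ
      have h2 : HasDerivAt (fun θ => ρ * Real.sin θ) (ρ * Real.cos θ) θ :=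
        (Real.hasDerivAt_sin θ).const_mul ρ
      exact ((hφ.differentiable (by simp) _).hasFDerivAt).comp_hasDerivAt θ (h1.prodMk h2)
    have hgd_cont : Continuous (fun θ : ℝ =>
        fderiv ℝ φ (ρ * Real.cos θ, ρ * Real.sin θ) (-(ρ * Real.sin θ), ρ * Real.cos θ)) := by
      have hcur : Continuous fun θ : ℝ => ((ρ * Real.cos θ, ρ * Real.sin θ) : ℝ×ℝ) := by
        continuity
      have hcd : Continuous fun θ : ℝ => fderiv ℝ φ (ρ * Real.cos θ, ρ * Real.sin θ) :=
        (hφ.continuous_fderiv (by simp)).comp hcur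
      exact hcd.clm_apply (by continuity)
    have hInt_gd : IntegrableOn (fun θ : ℝ =>
        fderiv ℝ φ (ρ * Real.cos θ, ρ * Real.sin θ) (-(ρ * Real.sin θ), ρ * Real.cos θ))
        (Ioo (-Real.pi) Real.pi) :=
      (hgd_cont.continuousOn.integrableOn_compact isCompact_Icc).mono_set Ioo_subset_Icc_self
    have hzero : (∫ θ in Ioo (-Real.pi) Real.pi,
        fderiv ℝ φ (ρ * Real.cos θ, ρ * Real.sin θ) (-(ρ * Real.sin θ), ρ * Real.cos θ)) = 0 := by
      rw [← integral_Ioc_eq_integral_Ioo,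
          ← intervalIntegral.integral_of_le (by linarith : -Real.pi ≤ Real.pi),
          intervalIntegral.integral_eq_sub_of_hasDerivAt (fun θ _ => hderiv θ)
            (hgd_cont.intervalIntegrable _ _)]
      simp
    have hpt : ∀ θ : ℝ,
        fderiv ℝ φ (ρ * Real.cos θ, ρ * Real.sin θ) (-(ρ * Real.sin θ), ρ * Real.cos θ)
          + ρ^(2*m+2) ≤ F (ρ, θ) := by
      intro θ
      set pt : ℝ×ℝ := ((ρ * Real.cos θ, ρ * Real.sin θ) : ℝ×ℝ) with hpt_def
      have hsum : pt.1^2 + pt.2^2 = ρ^2 := by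
        have := Real.sin_sq_add_cos_sq θ
        simp only [hpt_def]; nlinarith
      have hw : w2m m pt = ρ ^ (2*m) := by
        unfold w2m
        rw [hsum, ← Real.rpow_natCast ρ 2, ← Real.rpow_mul hρ0.le]
        norm_num
      have hexp2 : ρ ^ (2*m+2) = ρ ^ (2*m) * ρ^2 := by
        rw [Real.rpow_add hρ0, Real.rpow_two]
      have hkey : fderiv ℝ φ pt (-(ρ * Real.sin θ), ρ * Real.cos θ) + ρ^(2*m+2)
          = -(ρ * Real.sin θ) * ZFx m φ pt + (ρ * Real.cos θ) * ZFy m φ pt := by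
        simp only [ZFx, ZFy, phx, phy,
          clm_pair (fderiv ℝ φ pt) (-(ρ * Real.sin θ)) (ρ * Real.cos θ), hw, hexp2]
        linear_combination (-(ρ ^ (2*m) * ρ^2)) * Real.sin_sq_add_cos_sq θ
      have hcs := cs_ineq (-(ρ * Real.sin θ)) (ρ * Real.cos θ) (ZFx m φ pt) (ZFy m φ pt)
      have hmag : Real.sqrt ((-(ρ * Real.sin θ))^2 + (ρ * Real.cos θ)^2) = ρ := by
        rw [show (-(ρ * Real.sin θ))^2 + (ρ * Real.cos θ)^2 = ρ^2 by
          have := Real.sin_sq_add_cos_sq θ; nlinarith]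
        exact Real.sqrt_sq hρ0.le
      have heq : Real.sqrt ((-(ρ * Real.sin θ))^2 + (ρ * Real.cos θ)^2)
          * Real.sqrt (ZFx m φ pt^2 + ZFy m φ pt^2) = ρ * ZFnorm m φ pt := by
        rw [hmag]; rfl
      have hfinal : -(ρ * Real.sin θ) * ZFx m φ pt + (ρ * Real.cos θ) * ZFy m φ pt
          ≤ ρ * ZFnorm m φ pt := le_of_le_of_eq hcs heq
      rw [hkey]
      exact hfinal
    have hIntF : IntegrableOn (fun θ => F (ρ, θ)) (Ioo (-Real.pi) Real.pi) := by
      have hcF : Continuous fun θ => F (ρ, θ) :=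
        hFcont.comp (continuous_const.prodMk continuous_id)
      exact (hcF.continuousOn.integrableOn_compact isCompact_Icc).mono_set Ioo_subset_Icc_self
    have hIntC : IntegrableOn (fun _ : ℝ => ρ^(2*m+2)) (Ioo (-Real.pi) Real.pi) :=
      integrableOn_const (by rw [Real.volume_Ioo]; exact ENNReal.ofReal_ne_top)
    have hIntL : IntegrableOn (fun θ : ℝ =>
        fderiv ℝ φ (ρ * Real.cos θ, ρ * Real.sin θ) (-(ρ * Real.sin θ), ρ * Real.cos θ)
          + ρ^(2*m+2)) (Ioo (-Real.pi) Real.pi) := hInt_gd.add hIntC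
    have hmono := setIntegral_mono_on hIntL hIntF measurableSet_Ioo (fun θ _ => hpt θ)
    have hval : (∫ θ in Ioo (-Real.pi) Real.pi,
        (fderiv ℝ φ (ρ * Real.cos θ, ρ * Real.sin θ) (-(ρ * Real.sin θ), ρ * Real.cos θ)
          + ρ^(2*m+2))) = 2*Real.pi*ρ^(2*m+2) := by
      rw [integral_add hInt_gd hIntC, hzero, setIntegral_const, zero_add, smul_eq_mul,
        Real.volume_real_Ioo_of_le (by linarith)]
      ring
    calc 2*Real.pi*ρ^(2*m+2) = _ := hval.symm
      _ ≤ _ := hmono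
  have hLow_int : IntegrableOn (fun ρ : ℝ => 2*Real.pi*ρ^(2*m+2)) (Ioo (0:ℝ) r) := by
    have h : IntervalIntegrable (fun x : ℝ => x ^ (2*m+2)) volume 0 r :=
      intervalIntegral.intervalIntegrable_rpow' (by linarith)
    exact (h.const_mul (2*Real.pi)).1.mono_set Ioo_subset_Ioc_self
  have hlowval : (∫ ρ in Ioo (0:ℝ) r, 2*Real.pi*ρ^(2*m+2))
      = 2*Real.pi/(2*m+3) * r^(2*m+3) := by
    rw [← integral_Ioc_eq_integral_Ioo, ← intervalIntegral.integral_of_le hr.le,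
        intervalIntegral.integral_const_mul,
        integral_rpow (Or.inl (by linarith : (-1:ℝ) < 2*m+2))]
    rw [show (2*m+2+1:ℝ) = 2*m+3 by ring,
        Real.zero_rpow (ne_of_gt (by linarith : (0:ℝ) < 2*m+3))]
    ring
  have hlower : 2*Real.pi/(2*m+3) * r^(2*m+3) ≤ ∫ ζ in s, ZFnorm m φ ζ := by
    rw [e1, ← e2, htarget, e3, e4, e5, ← hlowval]
    exact setIntegral_mono_on hLow_int houter measurableSet_Ioo hinner
  constructor
  · refine le_trans ?_ hlower
    have h1 : (8*(Ca+1) + 2*m + 3 : ℝ)⁻¹ ≤ 2*Real.pi/(2*m+3) := by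
      rw [inv_eq_one_div]
      exact div_le_div₀ (by linarith) (by linarith) (by linarith) (by nlinarith)
    exact mul_le_mul_of_nonneg_right h1 (Real.rpow_nonneg hr.le _)
  · refine hupper.trans ?_
    have h := Real.rpow_nonneg hr.le (2*m+3)
    nlinarith [h]
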